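/- For every capacity C > 0, there exists a distortion value D with 2^{-2C} ≤ D ≤ 1 such that (2·D12(D,C) + 2·D)/4 < 2^{-2C}, where D12(D,C) = 2^{-4C} / ((D + √(D² − 2^{-4C}))·(2 − D − √(D² − 2^{-4C}))) is the Ozarow joint-distortion bound for balanced two-description coding of a unit-variance Gaussian source. That is, an optimized balanced two-description code achieves strictly smaller average distortion over the four sink nodes than the value 2^{-2C} achievable by any separate source and network coding scheme. -/

import Mathlib

/-!
Take the side distortion at its minimum `D = a := 2^{-2C}`. Then `D² = 2^{-4C}`, the square roots
vanish, and Ozarow's bound becomes `D12 = a² / (a (2 - a)) = a / (2 - a)`, which is `< a` because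
`a < 1`. Hence the average `(D12 + a) / 2` is already strictly below `a`.
-/

open Real

/-- Ozarow's joint distortion bound for side distortion `D`, where `q = 2^{-4C}`. -/
noncomputable def ozarowJointDistortion (q D : ℝ) : ℝ :=
  q / ((D + √(D ^ 2 - q)) * (2 - D - √(D ^ 2 - q)))

lemma ozarowJointDistortion_sq_self {a : ℝ} (ha : 0 < a) :
    ozarowJointDistortion (a ^ 2) a = a / (2 - a) := by
  rw [ozarowJointDistortion, sub_self, sqrt_zero, add_zero, sub_zero, sq,
    mul_div_mul_left _ _ ha.ne']

lemma div_two_sub_lt_self {a : ℝ} (ha : 0 < a) (ha1 : a < 1) : a / (2 - a) < a := by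
  rw [div_lt_iff₀ (by linarith)]
  nlinarith

/-- For every capacity `C > 0` there is a balanced side distortion `D` in
`[2^{-2C}, 1]` such that the average distortion `(2·D12 + 2·D)/4` with the
Ozarow joint-distortion bound `D12` is strictly below `2^{-2C}`, the best
distortion achievable by separate source and network coding. -/
theorem stmt_0 (C : ℝ) (hC : 0 < C) :
    ∃ D : ℝ, (2:ℝ) ^ (-(2*C)) ≤ D ∧ D ≤ 1 ∧
      (2 * ((2:ℝ) ^ (-(4*C)) /
          ((D + Real.sqrt (D^2 - (2:ℝ) ^ (-(4*C)))) *
           (2 - D - Real.sqrt (D^2 - (2:ℝ) ^ (-(4*C)))))) + 2 * D) / 4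
        < (2:ℝ) ^ (-(2*C)) := by
  set a : ℝ := (2:ℝ) ^ (-(2*C))
  have ha : 0 < a := rpow_pos_of_pos two_pos _
  have ha1 : a < 1 := rpow_lt_one_of_one_lt_of_neg one_lt_two (by linarith)
  have h4 : (2:ℝ) ^ (-(4*C)) = a ^ 2 := by
    rw [← rpow_mul_natCast zero_le_two]
    ring_nf
  refine ⟨a, le_rfl, ha1.le, ?_⟩
  change (2 * ozarowJointDistortion ((2:ℝ) ^ (-(4*C))) a + 2 * a) / 4 < a
  rw [h4, ozarowJointDistortion_sq_self ha]
  linarith [div_two_sub_lt_self ha ha1]
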